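/- arXiv:1905.00738 — 2 statements merged into one kernel-verified Lean document; each statement's English description precedes it below -/
import Mathlib

section
/- If a subgroup H of a group G is δ-normal in G (i.e., every finite intersection of conjugates of H is infinite), then any finite-index subgroup H' of H is also δ-normal in G. -/
/-!
Conjugation preserves relative indices, and a finite intersection of subgroups of finite
relative index has finite relative index in the corresponding intersection. Hence
`⋂ gᵢH'gᵢ⁻¹` has finite relative index in the infinite group `⋂ gᵢHgᵢ⁻¹`, so it is infinite itself.
-/

/-- The conjugate `gHg⁻¹` of a subgroup `H` by an element `g`. -/
def conjSubgroup {G : Type*} [Group G] (g : G) (H : Subgroup G) : Subgroup G :=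
  Subgroup.map (MulAut.conj g).toMonoidHom H

/-- A subgroup `H ≤ G` is δ-normal if every finite intersection of conjugates of `H`
is infinite. -/
def IsDeltaNormal {G : Type*} [Group G] (H : Subgroup G) : Prop :=
  ∀ (n : ℕ) (g : Fin n → G), ((⨅ i, conjSubgroup (g i) H : Subgroup G) : Set G).Infinite

namespace Subgroup

variable {G : Type*} [Group G]

theorem relIndex_iInf_iInf_ne_zero {ι : Type*} [Finite ι] {f f' : ι → Subgroup G}
    (h : ∀ i, (f i).relIndex (f' i) ≠ 0) : (⨅ i, f i).relIndex (⨅ i, f' i) ≠ 0 :=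
  relIndex_iInf_ne_zero fun i => mt (relIndex_eq_zero_of_le_right (iInf_le f' i)) (h i)

theorem infinite_of_relIndex_ne_zero {H K : Subgroup G} (h : H.relIndex K ≠ 0)
    (hK : (K : Set G).Infinite) : (H : Set G).Infinite := by
  intro hH
  have : Finite H := hH.to_subtype
  have : Finite (H.subgroupOf K) :=
    Finite.of_injective (fun x => (⟨x.1.1, x.2⟩ : H)) fun x y hxy =>
      Subtype.ext <| Subtype.ext <| by simpa using congrArg Subtype.val hxy
  have : Finite K := (finite_iff_finite_and_finiteIndex (H.subgroupOf K)).mpr ⟨this, ⟨h⟩⟩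
  exact hK (Set.toFinite (K : Set G))

end Subgroup

theorem relIndex_conjSubgroup {G : Type*} [Group G] (g : G) (H K : Subgroup G) :
    (conjSubgroup g H).relIndex (conjSubgroup g K) = H.relIndex K :=
  Subgroup.relIndex_map_map_of_injective H K (MulAut.conj g).injective

theorem finiteIndex_subgroup_of_deltaNormal_is_deltaNormal_general
    {G : Type*} [Group G] (H H' : Subgroup G)
    (hfi : (H'.subgroupOf H).FiniteIndex) (hδ : IsDeltaNormal H) :
    IsDeltaNormal H' := fun n g =>
  Subgroup.infinite_of_relIndex_ne_zero
    (Subgroup.relIndex_iInf_iInf_ne_zero fun i => by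
      rw [relIndex_conjSubgroup]
      exact hfi.index_ne_zero)
    (hδ n g)

/-- If `H` is δ-normal in `G`, then any finite-index subgroup `H'` of `H` is δ-normal in `G`. -/
theorem finiteIndex_subgroup_of_deltaNormal_is_deltaNormal
    {G : Type*} [Group G] (H H' : Subgroup G) (hle : H' ≤ H)
    (hfi : (H'.subgroupOf H).FiniteIndex) (hδ : IsDeltaNormal H) :
    IsDeltaNormal H' :=
  finiteIndex_subgroup_of_deltaNormal_is_deltaNormal_general H H' hfi hδ
end

section
/- If H is a δ-normal subgroup of a group G and G' is a finite-index subgroup of G, then H ∩ G' is a δ-normal subgroup of G'. -/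
theorem conj_subgroupOf_aux {G : Type*} [Group G] (H G' : Subgroup G) (g : G') :
    conjSubgroup g ((H ⊓ G').subgroupOf G') = (conjSubgroup (g : G) H).subgroupOf G' := by
  ext x
  simp only [conjSubgroup, Subgroup.mem_subgroupOf, Subgroup.mem_map,
    MulEquiv.coe_toMonoidHom, MulAut.conj_apply, Subgroup.mem_inf]
  constructor
  · rintro ⟨y, ⟨hy1, _⟩, rfl⟩
    exact ⟨y, hy1, rfl⟩
  · rintro ⟨z, hz, hzx⟩
    have hz' : z ∈ G' := by
      have : z = (g : G)⁻¹ * x * g := by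
        rw [← hzx]; group
      rw [this]
      exact G'.mul_mem (G'.mul_mem (G'.inv_mem g.2) x.2) g.2
    refine ⟨⟨z, hz'⟩, ⟨hz, hz'⟩, ?_⟩
    ext
    exact hzx


/-- If `H` is δ-normal in `G` and `G'` is a finite-index subgroup of `G`, then `H ∩ G'`
is δ-normal in `G'`. -/
theorem inter_finiteIndex_deltaNormal {G : Type*} [Group G] (H G' : Subgroup G)
    [G'.FiniteIndex] (hδ : IsDeltaNormal H) :
    IsDeltaNormal ((H ⊓ G').subgroupOf G') := by
  intro n g
  set K : Subgroup G := ⨅ i, conjSubgroup ((g i : G)) H with hK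
  have hiff : (⨅ i, conjSubgroup (g i) ((H ⊓ G').subgroupOf G')) = K.subgroupOf G' := by
    simp only [conj_subgroupOf_aux]
    ext x
    simp [Subgroup.mem_subgroupOf, Subgroup.mem_iInf, hK]
  rw [hiff]
  have hKinf : Infinite K := (hδ n fun i => (g i : G)).to_subtype
  -- G'.subgroupOf K has finite index in K, and K is infinite, so it is infinite
  haveI : (G'.subgroupOf K).FiniteIndex := Subgroup.instFiniteIndex_subgroupOf G' K
  have hLinf : Infinite (G'.subgroupOf K) := by
    by_contra hfin
    rw [not_infinite_iff_finite] at hfin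
    have h1 : Nat.card (G'.subgroupOf K) * (G'.subgroupOf K).index = Nat.card K :=
      Subgroup.card_mul_index _
    rw [Nat.card_eq_zero_of_infinite (α := K)] at h1
    rcases Nat.mul_eq_zero.mp h1 with h | h
    · exact (Nat.card_pos (α := G'.subgroupOf K)).ne' h
    · exact Subgroup.FiniteIndex.index_ne_zero h
  -- inject G'.subgroupOf K into K.subgroupOf G'
  rw [← Set.infinite_coe_iff]
  refine Infinite.of_injective
    (fun x : G'.subgroupOf K =>
      (⟨⟨((x : K) : G), x.2⟩, by
        simpa [Subgroup.mem_subgroupOf] using (x : K).2⟩ :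
        (K.subgroupOf G' : Set G'))) ?_
  intro a b hab
  have h := congrArg (fun y => ((y.1.1 : G)) ) hab
  simp only at h
  exact Subtype.ext (Subtype.ext h)
end
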